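/- Let d = 1, with V ≥ 0 locally bounded satisfying V(x) → ∞ as |x| → ∞. The relaxed Thomas–Fermi minimization problem E^TF_J = inf{ ∫J(ρ) + ∫Vρ − α∫ρ : ρ ≥ 0, ∫ρ = 1 } admits at least one minimizer ρ ∈ L³(ℝ). Every minimizer ρ satisfies the Euler–Lagrange conditions: there is a constant λ such that e_α′(ρ)·1_{ρ ≥ ρ_α} + V − α = λ almost everywhere on supp(ρ), and V − α ≥ λ almost everywhere on the complement of supp(ρ). -/

import Mathlib

/-!
For a level `μ`, minimize the Lagrangian `Jfun Iw s - (μ - V x) * s` over `s ≥ 0` separately at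
every point `x`. The function `J` is `C¹` with `J' = e_α'·1_{s ≥ ρ_α}` and lies above its tangents
on `[0, ∞)`, so the pointwise minimizers are exactly the points satisfying the first-order
conditions: the inverse of `e_α'` at `μ - V x` where this is positive, `0` where it is negative,
and anything in `[0, ρ_α]` where `V x = μ`. The mass of the largest pointwise minimizer is
monotone and right-continuous in `μ` by dominated convergence, its left limit is the mass of the
smallest one, it vanishes for `μ < 0` and exceeds `1` for large `μ`; at
`μ* = inf {μ | mass ≥ 1}` a convex combination of the two has mass `1`.

Since `E[ρ] = ∫ (J(ρ) - (μ* - V) ρ) + μ* - α` on admissible densities, this density minimizes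
`E`, and any other minimizer must minimize the Lagrangian almost everywhere, which gives the
Euler–Lagrange conditions with `λ = μ* - α`.
-/

open MeasureTheory Filter
open scoped Real ENNReal

noncomputable section

/-- `α = I_w²/(4 c_TF)` with `c_TF = π²`. -/
def alphaC (Iw : ℝ) : ℝ := Iw ^ 2 / (4 * Real.pi ^ 2)

/-- `ρ_α = I_w/(2 c_TF)`. -/
def rhoAlphaC (Iw : ℝ) : ℝ := Iw / (2 * Real.pi ^ 2)

/-- The relaxed local energy `J(x) = 1_{x ≥ ρ_α}(c_TF x³ − I_w x² + αx)`. -/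
def Jfun (Iw : ℝ) (x : ℝ) : ℝ :=
  if rhoAlphaC Iw ≤ x then Real.pi ^ 2 * x ^ 3 - Iw * x ^ 2 + alphaC Iw * x else 0

/-- Derivative `e_α′(x) = 3 c_TF x² − 2 I_w x + α` of the local energy. -/
def eAlphaDeriv (Iw : ℝ) (x : ℝ) : ℝ :=
  3 * Real.pi ^ 2 * x ^ 2 - 2 * Iw * x + alphaC Iw

/-- The relaxed Thomas–Fermi functional `E^TF_J[ρ] = ∫J(ρ) + ∫Vρ − α∫ρ`. -/
def EJfun (Iw : ℝ) (V ρ : ℝ → ℝ) : ℝ :=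
  (∫ x, Jfun Iw (ρ x)) + (∫ x, V x * ρ x) - alphaC Iw * ∫ x, ρ x

/-- Admissible densities for the relaxed problem. -/
def TFJadm (Iw : ℝ) (V : ℝ → ℝ) (ρ : ℝ → ℝ) : Prop :=
  Measurable ρ ∧ (∀ x, 0 ≤ ρ x) ∧ Integrable ρ ∧ (∫ x, ρ x = 1) ∧
    Integrable (fun x => Jfun Iw (ρ x)) ∧ Integrable (fun x => V x * ρ x)

/-- The relaxed Thomas–Fermi energy `E^TF_J`. -/
def ETFJ (Iw : ℝ) (V : ℝ → ℝ) : ℝ :=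
  sInf {e | ∃ ρ, TFJadm Iw V ρ ∧ e = EJfun Iw V ρ}

open Set Topology

section LocalEnergy

variable {Iw : ℝ}

def eAlpha (Iw x : ℝ) : ℝ := Real.pi ^ 2 * x ^ 3 - Iw * x ^ 2 + alphaC Iw * x

def JfunDeriv (Iw x : ℝ) : ℝ := eAlphaDeriv Iw x * if rhoAlphaC Iw ≤ x then 1 else 0

lemma rhoAlphaC_nonneg (hIw : 0 ≤ Iw) : 0 ≤ rhoAlphaC Iw := by
  unfold rhoAlphaC; positivity

lemma rhoAlphaC_pos (hIw : 0 < Iw) : 0 < rhoAlphaC Iw := by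
  unfold rhoAlphaC; positivity

lemma pi_sq_mul_rhoAlphaC (Iw : ℝ) : Real.pi ^ 2 * rhoAlphaC Iw = Iw / 2 := by
  unfold rhoAlphaC; field_simp

lemma eAlpha_eq (Iw x : ℝ) : eAlpha Iw x = Real.pi ^ 2 * x * (x - rhoAlphaC Iw) ^ 2 := by
  unfold eAlpha alphaC rhoAlphaC; field_simp; ring

lemma eAlphaDeriv_eq (Iw x : ℝ) :
    eAlphaDeriv Iw x = Real.pi ^ 2 * (3 * x - rhoAlphaC Iw) * (x - rhoAlphaC Iw) := by
  unfold eAlphaDeriv alphaC rhoAlphaC; field_simp; ring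

lemma eAlpha_rhoAlphaC (Iw : ℝ) : eAlpha Iw (rhoAlphaC Iw) = 0 := by
  rw [eAlpha_eq]; ring

lemma eAlphaDeriv_rhoAlphaC (Iw : ℝ) : eAlphaDeriv Iw (rhoAlphaC Iw) = 0 := by
  rw [eAlphaDeriv_eq]; ring

lemma hasDerivAt_eAlpha (Iw x : ℝ) : HasDerivAt (eAlpha Iw) (eAlphaDeriv Iw x) x := by
  have h := (((hasDerivAt_pow 3 x).const_mul (Real.pi ^ 2)).sub
    ((hasDerivAt_pow 2 x).const_mul Iw)).add ((hasDerivAt_id x).const_mul (alphaC Iw))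
  exact h.congr_deriv (by unfold eAlphaDeriv; ring)

lemma eAlpha_add_eAlphaDeriv_mul_le (hIw : 0 ≤ Iw) {s t : ℝ} (hs : rhoAlphaC Iw ≤ s)
    (ht : rhoAlphaC Iw ≤ t) : eAlpha Iw t + eAlphaDeriv Iw t * (s - t) ≤ eAlpha Iw s := by
  have hgap : eAlpha Iw s - eAlpha Iw t - eAlphaDeriv Iw t * (s - t)
      = (s - t) ^ 2 * (Real.pi ^ 2 * (s + 2 * t) - Iw) := by
    unfold eAlpha eAlphaDeriv; ring
  have hcoef : 0 ≤ Real.pi ^ 2 * (s + 2 * t) - Iw := by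
    have := pi_sq_mul_rhoAlphaC Iw
    nlinarith [sq_nonneg Real.pi]
  nlinarith [mul_nonneg (sq_nonneg (s - t)) hcoef]

lemma Jfun_eq_ite (Iw x : ℝ) :
    Jfun Iw x = if rhoAlphaC Iw ≤ x then eAlpha Iw x else 0 := rfl

lemma Jfun_nonneg {x : ℝ} (hx : 0 ≤ x) : 0 ≤ Jfun Iw x := by
  rw [Jfun_eq_ite, eAlpha_eq]; split_ifs <;> positivity

lemma Jfun_zero (Iw : ℝ) : Jfun Iw 0 = 0 := by
  simp [Jfun]

lemma Jfun_of_le {x : ℝ} (hx : x ≤ rhoAlphaC Iw) : Jfun Iw x = 0 := by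
  rw [Jfun_eq_ite]
  split_ifs with h
  · rw [le_antisymm hx h, eAlpha_rhoAlphaC]
  · rfl

lemma JfunDeriv_of_le {x : ℝ} (hx : x ≤ rhoAlphaC Iw) : JfunDeriv Iw x = 0 := by
  unfold JfunDeriv
  split_ifs with h
  · rw [le_antisymm hx h, eAlphaDeriv_rhoAlphaC, zero_mul]
  · rw [mul_zero]

lemma hasDerivAt_Jfun (Iw x : ℝ) : HasDerivAt (Jfun Iw) (JfunDeriv Iw x) x := by
  rcases lt_trichotomy x (rhoAlphaC Iw) with hx | rfl | hx
  · rw [JfunDeriv_of_le hx.le]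
    exact (hasDerivAt_const x 0).congr_of_eventuallyEq
      (eventually_of_mem (Iio_mem_nhds hx) fun y hy => Jfun_of_le (le_of_lt hy))
  · rw [JfunDeriv_of_le le_rfl, ← hasDerivWithinAt_univ, ← Iic_union_Ici]
    refine HasDerivWithinAt.union ?_ ?_
    · exact (hasDerivWithinAt_const _ _ 0).congr (fun y hy => Jfun_of_le hy) (Jfun_of_le le_rfl)
    · rw [← eAlphaDeriv_rhoAlphaC Iw]
      exact (hasDerivAt_eAlpha Iw _).hasDerivWithinAt.congr (fun y hy => if_pos hy)
        (if_pos le_rfl)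
  · have hderiv : JfunDeriv Iw x = eAlphaDeriv Iw x := by
      rw [JfunDeriv, if_pos hx.le, mul_one]
    rw [hderiv]
    exact (hasDerivAt_eAlpha Iw x).congr_of_eventuallyEq
      (eventually_of_mem (Ioi_mem_nhds hx) fun y hy => if_pos (le_of_lt hy))

lemma continuous_Jfun (Iw : ℝ) : Continuous (Jfun Iw) :=
  continuous_iff_continuousAt.2 fun x => (hasDerivAt_Jfun Iw x).continuousAt

lemma Jfun_add_JfunDeriv_mul_le (hIw : 0 ≤ Iw) {s t : ℝ} (hs : 0 ≤ s) :
    Jfun Iw t + JfunDeriv Iw t * (s - t) ≤ Jfun Iw s := by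
  rcases le_or_gt t (rhoAlphaC Iw) with ht | ht
  · rw [Jfun_of_le ht, JfunDeriv_of_le ht, zero_mul, add_zero]
    exact Jfun_nonneg hs
  rw [JfunDeriv, if_pos ht.le, mul_one, Jfun_eq_ite, if_pos ht.le]
  rcases le_or_gt (rhoAlphaC Iw) s with hsρ | hsρ
  · rw [Jfun_eq_ite, if_pos hsρ]
    exact eAlpha_add_eAlphaDeriv_mul_le hIw hsρ ht.le
  · -- The tangent at `t` has nonnegative slope and lies below `eAlpha` at `ρ_α`, where it vanishes.
    have hslope : 0 ≤ eAlphaDeriv Iw t := by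
      rw [eAlphaDeriv_eq]
      have := rhoAlphaC_nonneg hIw
      have : 0 ≤ 3 * t - rhoAlphaC Iw := by linarith
      have : 0 ≤ t - rhoAlphaC Iw := by linarith
      positivity
    have htangent := eAlpha_add_eAlphaDeriv_mul_le hIw le_rfl ht.le
    rw [eAlpha_rhoAlphaC] at htangent
    rw [Jfun_of_le hsρ.le]
    nlinarith

theorem isMinOn_Jfun_sub_mul_iff (hIw : 0 < Iw) {u t : ℝ} (ht : 0 ≤ t) :
    IsMinOn (fun s => Jfun Iw s - u * s) (Ici 0) t ↔
      (t ≠ 0 → JfunDeriv Iw t = u) ∧ (t = 0 → u ≤ 0) := by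
  have hρ := rhoAlphaC_pos hIw
  constructor
  · intro hmin
    refine ⟨fun htne => ?_, fun ht0 => ?_⟩
    · have hloc := hmin.isLocalMin (Ici_mem_nhds (lt_of_le_of_ne ht (Ne.symm htne)))
      have := hloc.hasDerivAt_eq_zero ((hasDerivAt_Jfun Iw t).sub ((hasDerivAt_id t).const_mul u))
      simp only [mul_one] at this
      linarith
    · have h := isMinOn_iff.1 hmin (rhoAlphaC Iw) (mem_Ici.2 hρ.le)
      rw [ht0, Jfun_of_le hρ.le, Jfun_of_le le_rfl] at h
      nlinarith
  · rintro ⟨hderiv, hzero⟩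
    refine isMinOn_iff.2 fun s (hs : 0 ≤ s) => ?_
    rcases eq_or_ne t 0 with rfl | htne
    · rw [Jfun_of_le hρ.le]
      nlinarith [hzero rfl, Jfun_nonneg (Iw := Iw) hs]
    · have := Jfun_add_JfunDeriv_mul_le hIw.le (t := t) hs
      rw [hderiv htne] at this
      linarith

end LocalEnergy

section Profiles

variable {Iw : ℝ}

/-- The larger root of `eAlphaDeriv Iw t = u`. -/
def eAlphaDerivInv (Iw u : ℝ) : ℝ :=
  (Iw + √(Iw ^ 2 / 4 + 3 * Real.pi ^ 2 * u)) / (3 * Real.pi ^ 2)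

lemma eAlphaDeriv_eAlphaDerivInv {u : ℝ} (hu : 0 ≤ u) :
    eAlphaDeriv Iw (eAlphaDerivInv Iw u) = u := by
  unfold eAlphaDeriv eAlphaDerivInv alphaC
  set r := √(Iw ^ 2 / 4 + 3 * Real.pi ^ 2 * u)
  have hsq : r ^ 2 = Iw ^ 2 / 4 + 3 * Real.pi ^ 2 * u := Real.sq_sqrt (by positivity)
  field_simp
  linear_combination 4 * hsq

lemma eAlphaDerivInv_zero (hIw : 0 ≤ Iw) : eAlphaDerivInv Iw 0 = rhoAlphaC Iw := by
  rw [eAlphaDerivInv, mul_zero, add_zero, show Iw ^ 2 / 4 = (Iw / 2) ^ 2 by ring,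
    Real.sqrt_sq (by linarith), rhoAlphaC]
  field_simp
  ring

lemma monotone_eAlphaDerivInv (Iw : ℝ) : Monotone (eAlphaDerivInv Iw) := by
  intro u v huv
  unfold eAlphaDerivInv
  gcongr

lemma continuous_eAlphaDerivInv (Iw : ℝ) : Continuous (eAlphaDerivInv Iw) := by
  unfold eAlphaDerivInv
  fun_prop

lemma rhoAlphaC_le_eAlphaDerivInv (hIw : 0 ≤ Iw) {u : ℝ} (hu : 0 ≤ u) :
    rhoAlphaC Iw ≤ eAlphaDerivInv Iw u :=
  eAlphaDerivInv_zero hIw ▸ monotone_eAlphaDerivInv Iw hu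

/-! For `u > 0` the function `s ↦ Jfun Iw s - u * s` has the single minimizer
`eAlphaDerivInv Iw u` on `[0, ∞)`, for `u < 0` the single minimizer `0`, and for `u = 0` its
minimizers form `[0, ρ_α]`; `upperProfile` and `lowerProfile` pick the largest and the
smallest one. -/

def upperProfile (Iw u : ℝ) : ℝ := if 0 ≤ u then eAlphaDerivInv Iw u else 0

def lowerProfile (Iw u : ℝ) : ℝ := if 0 < u then eAlphaDerivInv Iw u else 0

lemma upperProfile_of_neg {u : ℝ} (hu : u < 0) : upperProfile Iw u = 0 :=
  if_neg (not_le.2 hu)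

lemma lowerProfile_of_nonpos {u : ℝ} (hu : u ≤ 0) : lowerProfile Iw u = 0 :=
  if_neg (not_lt.2 hu)

lemma upperProfile_nonneg (hIw : 0 ≤ Iw) (u : ℝ) : 0 ≤ upperProfile Iw u := by
  unfold upperProfile
  split_ifs with hu
  · exact (rhoAlphaC_nonneg hIw).trans (rhoAlphaC_le_eAlphaDerivInv hIw hu)
  · exact le_rfl

lemma monotone_upperProfile (hIw : 0 ≤ Iw) : Monotone (upperProfile Iw) := by
  intro u v huv
  unfold upperProfile
  split_ifs with hu hv hv
  · exact monotone_eAlphaDerivInv Iw huv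
  · exact absurd (hu.trans huv) hv
  · exact (rhoAlphaC_nonneg hIw).trans (rhoAlphaC_le_eAlphaDerivInv hIw hv)
  · exact le_rfl

lemma monotone_lowerProfile (hIw : 0 ≤ Iw) : Monotone (lowerProfile Iw) := by
  intro u v huv
  unfold lowerProfile
  split_ifs with hu hv hv
  · exact monotone_eAlphaDerivInv Iw huv
  · exact absurd (hu.trans_le huv) hv
  · exact (rhoAlphaC_nonneg hIw).trans (rhoAlphaC_le_eAlphaDerivInv hIw hv.le)
  · exact le_rfl

lemma tendsto_upperProfile_nhdsGT (u : ℝ) :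
    Tendsto (upperProfile Iw) (𝓝[>] u) (𝓝 (upperProfile Iw u)) := by
  by_cases hu : 0 ≤ u
  · rw [upperProfile, if_pos hu]
    refine ((continuous_eAlphaDerivInv Iw).tendsto u).mono_left nhdsWithin_le_nhds |>.congr' ?_
    filter_upwards [self_mem_nhdsWithin] with v (hv : u < v)
    exact (if_pos (hu.trans hv.le)).symm
  · rw [upperProfile_of_neg (not_le.1 hu)]
    refine tendsto_const_nhds.congr' (EventuallyEq.filter_mono ?_ nhdsWithin_le_nhds)
    filter_upwards [Iio_mem_nhds (not_le.1 hu)] with v hv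
    exact (upperProfile_of_neg hv).symm

lemma tendsto_upperProfile_nhdsLT (u : ℝ) :
    Tendsto (upperProfile Iw) (𝓝[<] u) (𝓝 (lowerProfile Iw u)) := by
  by_cases hu : 0 < u
  · rw [lowerProfile, if_pos hu]
    refine (((continuous_eAlphaDerivInv Iw).tendsto u).congr' ?_).mono_left nhdsWithin_le_nhds
    filter_upwards [Ioi_mem_nhds hu] with v (hv : 0 < v)
    exact (if_pos hv.le).symm
  · rw [lowerProfile_of_nonpos (not_lt.1 hu)]
    refine tendsto_const_nhds.congr' ?_
    filter_upwards [self_mem_nhdsWithin] with v (hv : v < u)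
    exact (upperProfile_of_neg (hv.trans_le (not_lt.1 hu))).symm

lemma isMinOn_lowerProfile_add_upperProfile (hIw : 0 < Iw) {a b : ℝ} (ha : 0 ≤ a)
    (hb : 0 ≤ b) (hab : a + b = 1) (u : ℝ) :
    IsMinOn (fun s => Jfun Iw s - u * s) (Ici 0)
      (a * lowerProfile Iw u + b * upperProfile Iw u) := by
  have hρ := rhoAlphaC_pos hIw
  rcases lt_trichotomy u 0 with hu | rfl | hu
  · rw [lowerProfile_of_nonpos hu.le, upperProfile_of_neg hu, mul_zero, mul_zero, add_zero,
      isMinOn_Jfun_sub_mul_iff hIw le_rfl]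
    exact ⟨fun h => absurd rfl h, fun _ => hu.le⟩
  · rw [lowerProfile_of_nonpos le_rfl, upperProfile, if_pos le_rfl, eAlphaDerivInv_zero hIw.le,
      mul_zero, zero_add, isMinOn_Jfun_sub_mul_iff hIw (by positivity)]
    exact ⟨fun _ => JfunDeriv_of_le (by nlinarith), fun _ => le_rfl⟩
  · have hroot := rhoAlphaC_le_eAlphaDerivInv hIw.le hu.le
    rw [lowerProfile, upperProfile, if_pos hu, if_pos hu.le, ← add_mul, hab, one_mul,
      isMinOn_Jfun_sub_mul_iff hIw (hρ.le.trans hroot)]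
    refine ⟨fun _ => ?_, fun h => absurd h (hρ.trans_le hroot).ne'⟩
    rw [JfunDeriv, if_pos hroot, mul_one, eAlphaDeriv_eAlphaDerivInv hu.le]

end Profiles

lemma memLp_of_bound_of_support_subset {α E : Type*} [MeasurableSpace α] {μ : Measure α}
    [NormedAddCommGroup E] {f : α → E} {s : Set α} (hs : MeasurableSet s) (hμs : μ s ≠ ∞)
    (hf : AEStronglyMeasurable f μ) {C : ℝ} (hC : ∀ x ∈ s, ‖f x‖ ≤ C)
    (hsupp : Function.support f ⊆ s) (p : ℝ≥0∞) : MemLp f p μ := by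
  have : IsFiniteMeasure (μ.restrict s) := isFiniteMeasure_restrict.2 hμs
  rw [← indicator_eq_self.2 hsupp, memLp_indicator_iff_restrict hs]
  exact MemLp.of_bound hf.restrict C (ae_restrict_of_forall_mem hs hC)

section Sublevel

variable {Iw : ℝ} {V : ℝ → ℝ}

lemma volume_setOf_le_lt_top (hVinf : Tendsto V (cocompact ℝ) atTop) (c : ℝ) :
    volume {x | V x ≤ c} < ∞ := by
  obtain ⟨K, hK, hKc⟩ := mem_cocompact.1 (hVinf.eventually (eventually_gt_atTop c))
  refine (measure_mono fun x (hx : V x ≤ c) => ?_).trans_lt hK.measure_lt_top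
  by_contra hxK
  exact (hKc hxK).not_ge hx

lemma memLp_comp_sub_of_monotone (hVmeas : Measurable V) (hV0 : ∀ x, 0 ≤ V x)
    (hVinf : Tendsto V (cocompact ℝ) atTop) {g : ℝ → ℝ} (hg : Monotone g)
    (hg0 : ∀ u < 0, g u = 0) (μ : ℝ) (p : ℝ≥0∞) : MemLp (fun x => g (μ - V x)) p := by
  refine memLp_of_bound_of_support_subset (f := fun x => g (μ - V x))
    (measurableSet_le hVmeas measurable_const) (volume_setOf_le_lt_top hVinf μ).ne
    (hg.measurable.comp (measurable_const.sub hVmeas)).aestronglyMeasurable (C := g μ)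
    (fun x (hx : V x ≤ μ) => ?_)
    (Function.support_subset_iff'.2 fun x (hx : ¬V x ≤ μ) => hg0 _ (by linarith)) p
  have hnonneg : 0 ≤ g (μ - V x) := (hg0 (-1) (by norm_num)).symm.le.trans (hg (by linarith))
  rw [Real.norm_eq_abs, abs_of_nonneg hnonneg]
  exact hg (by linarith [hV0 x])

lemma tfjAdm_comp_sub_of_monotone (hVmeas : Measurable V) (hV0 : ∀ x, 0 ≤ V x)
    (hVinf : Tendsto V (cocompact ℝ) atTop) {g : ℝ → ℝ} (hg : Monotone g)
    (hg0 : ∀ u < 0, g u = 0) {μ : ℝ} (hmass : ∫ x, g (μ - V x) = 1) :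
    TFJadm Iw V (fun x => g (μ - V x)) := by
  set s := {x | V x ≤ μ}
  have hs : MeasurableSet s := measurableSet_le hVmeas measurable_const
  have hsfin : volume s ≠ ∞ := (volume_setOf_le_lt_top hVinf μ).ne
  have hmeas : Measurable fun x => g (μ - V x) := hg.measurable.comp (measurable_const.sub hVmeas)
  have hnonneg : ∀ u, 0 ≤ g u := fun u =>
    (hg0 (min u (-1)) (by simp)).symm.le.trans (hg (min_le_left _ _))
  have hzero : ∀ x ∉ s, g (μ - V x) = 0 := fun x (hx : ¬V x ≤ μ) => hg0 _ (by linarith)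
  have hbound : ∀ x ∈ s, g (μ - V x) ≤ g μ := fun x _ => hg (by linarith [hV0 x])
  obtain ⟨B, hB⟩ := (isCompact_Icc (a := 0) (b := g μ)).exists_bound_of_continuousOn
    (continuous_Jfun Iw).continuousOn
  refine ⟨hmeas, fun x => hnonneg _,
    memLp_one_iff_integrable.1 (memLp_comp_sub_of_monotone hVmeas hV0 hVinf hg hg0 μ 1), hmass,
    memLp_one_iff_integrable.1 ?_, memLp_one_iff_integrable.1 ?_⟩
  · refine memLp_of_bound_of_support_subset (f := fun x => Jfun Iw (g (μ - V x))) hs hsfin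
      ((continuous_Jfun Iw).measurable.comp hmeas).aestronglyMeasurable
      (fun x hx => hB _ ⟨hnonneg _, hbound x hx⟩)
      (Function.support_subset_iff'.2 fun x hx => ?_) 1
    simp only [hzero x hx, Jfun_zero]
  · refine memLp_of_bound_of_support_subset (f := fun x => V x * g (μ - V x)) hs hsfin
      (hVmeas.mul hmeas).aestronglyMeasurable
      (C := μ * g μ) (fun x (hx : V x ≤ μ) => ?_)
      (Function.support_subset_iff'.2 fun x hx => by simp only [hzero x hx, mul_zero]) 1
    rw [Real.norm_eq_abs, abs_of_nonneg (mul_nonneg (hV0 x) (hnonneg _))]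
    exact mul_le_mul hx (hbound x hx) (hnonneg _) ((hV0 x).trans hx)

lemma integrable_upperProfile_sub (hIw : 0 ≤ Iw) (hVmeas : Measurable V) (hV0 : ∀ x, 0 ≤ V x)
    (hVinf : Tendsto V (cocompact ℝ) atTop) (μ : ℝ) :
    Integrable fun x => upperProfile Iw (μ - V x) :=
  memLp_one_iff_integrable.1 (memLp_comp_sub_of_monotone hVmeas hV0 hVinf
    (monotone_upperProfile hIw) (fun _ => upperProfile_of_neg) μ 1)

lemma integrable_lowerProfile_sub (hIw : 0 ≤ Iw) (hVmeas : Measurable V) (hV0 : ∀ x, 0 ≤ V x)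
    (hVinf : Tendsto V (cocompact ℝ) atTop) (μ : ℝ) :
    Integrable fun x => lowerProfile Iw (μ - V x) :=
  memLp_one_iff_integrable.1 (memLp_comp_sub_of_monotone hVmeas hV0 hVinf
    (monotone_lowerProfile hIw) (fun _ hu => lowerProfile_of_nonpos hu.le) μ 1)

lemma tendsto_integral_upperProfile_sub (hIw : 0 ≤ Iw) (hVmeas : Measurable V)
    (hV0 : ∀ x, 0 ≤ V x) (hVinf : Tendsto V (cocompact ℝ) atTop) {l : Filter ℝ}
    [l.IsCountablyGenerated] {c : ℝ} (hl : ∀ᶠ μ in l, μ ≤ c) {f : ℝ → ℝ}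
    (hlim : ∀ x, Tendsto (fun μ => upperProfile Iw (μ - V x)) l (𝓝 (f x))) :
    Tendsto (fun μ => ∫ x, upperProfile Iw (μ - V x)) l (𝓝 (∫ x, f x)) := by
  have hint := integrable_upperProfile_sub hIw hVmeas hV0 hVinf
  refine tendsto_integral_filter_of_dominated_convergence (fun x => upperProfile Iw (c - V x))
    (Eventually.of_forall fun μ => (hint μ).aestronglyMeasurable) ?_ (hint c)
    (Eventually.of_forall hlim)
  filter_upwards [hl] with μ hμ
  refine Eventually.of_forall fun x => ?_
  rw [Real.norm_eq_abs, abs_of_nonneg (upperProfile_nonneg hIw _)]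
  exact monotone_upperProfile hIw (by linarith)

lemma exists_one_le_integral_upperProfile_sub (hIw : 0 < Iw) (hVmeas : Measurable V)
    (hV0 : ∀ x, 0 ≤ V x) (hVinf : Tendsto V (cocompact ℝ) atTop) :
    ∃ μ, 1 ≤ ∫ x, upperProfile Iw (μ - V x) := by
  have hρ := rhoAlphaC_pos hIw
  have hvol : Tendsto (fun n : ℕ => volume {x | V x ≤ n}) atTop (𝓝 ∞) := by
    have := tendsto_measure_iUnion_atTop (μ := volume) (s := fun n : ℕ => {x | V x ≤ n})
      fun m n hmn x (hx : V x ≤ m) => hx.trans (by exact_mod_cast hmn)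
    have hexhaust : ⋃ n : ℕ, {x | V x ≤ n} = univ :=
      iUnion_eq_univ_iff.2 fun x => exists_nat_ge (V x)
    rwa [hexhaust, Real.volume_univ] at this
  obtain ⟨n, hn⟩ :=
    (hvol.eventually (lt_mem_nhds (ENNReal.ofReal_lt_top (r := 1 / rhoAlphaC Iw)))).exists
  set s := {x | V x ≤ (n : ℝ)}
  have hs : MeasurableSet s := measurableSet_le hVmeas measurable_const
  have hsfin : volume s ≠ ∞ := (volume_setOf_le_lt_top hVinf n).ne
  have hle : ∀ x, s.indicator (fun _ => rhoAlphaC Iw) x ≤ upperProfile Iw (n - V x) := by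
    intro x
    by_cases hx : x ∈ s
    · have hu : 0 ≤ (n : ℝ) - V x := sub_nonneg.2 hx
      rw [indicator_of_mem hx, upperProfile, if_pos hu]
      exact rhoAlphaC_le_eAlphaDerivInv hIw.le hu
    · rw [indicator_of_notMem hx]
      exact upperProfile_nonneg hIw.le _
  refine ⟨n, ?_⟩
  calc (1 : ℝ) = rhoAlphaC Iw * (1 / rhoAlphaC Iw) := by field_simp
    _ ≤ rhoAlphaC Iw * volume.real s := by
      gcongr
      exact ((ENNReal.ofReal_lt_iff_lt_toReal (by positivity) hsfin).1 hn).le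
    _ = ∫ x, s.indicator (fun _ => rhoAlphaC Iw) x := by
      rw [integral_indicator_const _ hs, smul_eq_mul, mul_comm]
    _ ≤ ∫ x, upperProfile Iw (n - V x) :=
      integral_mono ((integrable_indicator_iff hs).2 (integrableOn_const hsfin))
        (integrable_upperProfile_sub hIw.le hVmeas hV0 hVinf n) hle

end Sublevel

lemma exists_le_and_le_of_monotone {M L : ℝ → ℝ} {c : ℝ} (hM : Monotone M)
    (hright : ∀ μ, Tendsto M (𝓝[>] μ) (𝓝 (M μ)))
    (hleft : ∀ μ, Tendsto M (𝓝[<] μ) (𝓝 (L μ)))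
    (hlow : ∃ μ, M μ < c) (hhigh : ∃ μ, c ≤ M μ) : ∃ μ, L μ ≤ c ∧ c ≤ M μ := by
  obtain ⟨μ₁, hμ₁⟩ := hlow
  have hbdd : BddBelow {μ | c ≤ M μ} :=
    ⟨μ₁, fun μ hμ => le_of_not_gt fun h => (hμ.trans (hM h.le)).not_gt hμ₁⟩
  refine ⟨sInf {μ | c ≤ M μ}, le_of_tendsto (hleft _) ?_, ge_of_tendsto (hright _) ?_⟩
  · filter_upwards [self_mem_nhdsWithin] with μ hμ
    have hμS : μ ∉ {μ | c ≤ M μ} := notMem_of_lt_csInf hμ hbdd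
    exact (not_le.1 hμS).le
  · filter_upwards [self_mem_nhdsWithin] with μ hμ
    obtain ⟨ν, hν : c ≤ M ν, hνμ⟩ := exists_lt_of_csInf_lt hhigh hμ
    exact hν.trans (hM hνμ.le)

section Bathtub

variable {Iw : ℝ} {V : ℝ → ℝ}

lemma exists_integral_lowerProfile_le_one_le_integral_upperProfile (hIw : 0 < Iw)
    (hVmeas : Measurable V) (hV0 : ∀ x, 0 ≤ V x) (hVinf : Tendsto V (cocompact ℝ) atTop) :
    ∃ μ, ∫ x, lowerProfile Iw (μ - V x) ≤ 1 ∧ 1 ≤ ∫ x, upperProfile Iw (μ - V x) := by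
  have hint := integrable_upperProfile_sub hIw.le hVmeas hV0 hVinf
  refine exists_le_and_le_of_monotone (fun μ ν hμν => integral_mono (hint μ) (hint ν)
      fun x => monotone_upperProfile hIw.le (by linarith)) (fun μ₀ => ?_) (fun μ₀ => ?_)
    ⟨-1, ?_⟩ (exists_one_le_integral_upperProfile_sub hIw hVmeas hV0 hVinf)
  · refine tendsto_integral_upperProfile_sub hIw.le hVmeas hV0 hVinf (c := μ₀ + 1) ?_
      fun x => (tendsto_upperProfile_nhdsGT _).comp
        ((continuous_sub_right (V x)).continuousWithinAt.tendsto_nhdsWithin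
          fun μ (hμ : μ₀ < μ) => sub_lt_sub_right hμ (V x))
    filter_upwards [Ioo_mem_nhdsGT (lt_add_one μ₀)] with μ hμ
    exact hμ.2.le
  · refine tendsto_integral_upperProfile_sub hIw.le hVmeas hV0 hVinf (c := μ₀) ?_
      fun x => (tendsto_upperProfile_nhdsLT _).comp
        ((continuous_sub_right (V x)).continuousWithinAt.tendsto_nhdsWithin
          fun μ (hμ : μ < μ₀) => sub_lt_sub_right hμ (V x))
    filter_upwards [self_mem_nhdsWithin] with μ (hμ : μ < μ₀)
    exact hμ.le
  · have hzero : ∀ x, upperProfile Iw (-1 - V x) = 0 := fun x =>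
      upperProfile_of_neg (by linarith [hV0 x])
    simp only [hzero, integral_zero, zero_lt_one]

theorem exists_tfjAdm_isMinOn (hIw : 0 < Iw) (hVmeas : Measurable V) (hV0 : ∀ x, 0 ≤ V x)
    (hVinf : Tendsto V (cocompact ℝ) atTop) :
    ∃ μ ρ₀, TFJadm Iw V ρ₀ ∧ MemLp ρ₀ (ENNReal.ofReal 3) ∧
      ∀ x, IsMinOn (fun s => Jfun Iw s - (μ - V x) * s) (Ici 0) (ρ₀ x) := by
  obtain ⟨μ, hlow, hhigh⟩ :=
    exists_integral_lowerProfile_le_one_le_integral_upperProfile hIw hVmeas hV0 hVinf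
  obtain ⟨a, b, ha, hb, hab, hmass⟩ : (1 : ℝ) ∈
      segment ℝ (∫ x, lowerProfile Iw (μ - V x)) (∫ x, upperProfile Iw (μ - V x)) := by
    rw [segment_eq_Icc (hlow.trans hhigh)]
    exact ⟨hlow, hhigh⟩
  set g : ℝ → ℝ := fun u => a * lowerProfile Iw u + b * upperProfile Iw u
  have hg : Monotone g :=
    ((monotone_lowerProfile hIw.le).const_mul ha).add ((monotone_upperProfile hIw.le).const_mul hb)
  have hg0 : ∀ u < 0, g u = 0 := fun u hu => by
    simp only [g, lowerProfile_of_nonpos hu.le, upperProfile_of_neg hu, mul_zero, add_zero]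
  have hgmass : ∫ x, g (μ - V x) = 1 := by
    rw [integral_add ((integrable_lowerProfile_sub hIw.le hVmeas hV0 hVinf μ).const_mul a)
      ((integrable_upperProfile_sub hIw.le hVmeas hV0 hVinf μ).const_mul b),
      integral_const_mul, integral_const_mul]
    exact hmass
  exact ⟨μ, fun x => g (μ - V x), tfjAdm_comp_sub_of_monotone hVmeas hV0 hVinf hg hg0 hgmass,
    memLp_comp_sub_of_monotone hVmeas hV0 hVinf hg hg0 μ _,
    fun x => isMinOn_lowerProfile_add_upperProfile hIw ha hb hab _⟩

end Bathtub

section Energy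

variable {Iw : ℝ} {V ρ ρ₀ : ℝ → ℝ}

lemma integrable_Jfun_sub_mul (hρ : TFJadm Iw V ρ) (μ : ℝ) :
    Integrable fun x => Jfun Iw (ρ x) - (μ - V x) * ρ x := by
  obtain ⟨-, -, hint, -, hJ, hV⟩ := hρ
  have hsum : Integrable fun x => Jfun Iw (ρ x) + V x * ρ x - μ * ρ x :=
    (hJ.add hV).sub (hint.const_mul μ)
  convert hsum using 2
  ring

lemma EJfun_eq_integral_add (hρ : TFJadm Iw V ρ) (μ : ℝ) :
    EJfun Iw V ρ = (∫ x, Jfun Iw (ρ x) - (μ - V x) * ρ x) + (μ - alphaC Iw) := by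
  obtain ⟨-, -, hint, hone, hJ, hV⟩ := hρ
  have hJV : Integrable fun x => Jfun Iw (ρ x) + V x * ρ x := hJ.add hV
  calc EJfun Iw V ρ = (∫ x, Jfun Iw (ρ x) + V x * ρ x - μ * ρ x) + (μ - alphaC Iw) := by
        rw [integral_sub hJV (hint.const_mul μ), integral_add hJ hV, integral_const_mul, EJfun,
          hone]
        ring
    _ = _ := by
        congr 2
        ext x
        ring

lemma EJfun_le_of_isMinOn {μ : ℝ} (hρ₀ : TFJadm Iw V ρ₀)
    (hmin : ∀ x, IsMinOn (fun s => Jfun Iw s - (μ - V x) * s) (Ici 0) (ρ₀ x))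
    (hρ : TFJadm Iw V ρ) : EJfun Iw V ρ₀ ≤ EJfun Iw V ρ := by
  rw [EJfun_eq_integral_add hρ₀ μ, EJfun_eq_integral_add hρ μ]
  exact add_le_add_left (integral_mono (integrable_Jfun_sub_mul hρ₀ μ)
    (integrable_Jfun_sub_mul hρ μ) fun x => isMinOn_iff.1 (hmin x) _ (hρ.2.1 x)) _

lemma ae_isMinOn_of_EJfun_eq {μ : ℝ} (hρ₀ : TFJadm Iw V ρ₀)
    (hmin : ∀ x, IsMinOn (fun s => Jfun Iw s - (μ - V x) * s) (Ici 0) (ρ₀ x))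
    (hρ : TFJadm Iw V ρ) (hE : EJfun Iw V ρ = EJfun Iw V ρ₀) :
    ∀ᵐ x, IsMinOn (fun s => Jfun Iw s - (μ - V x) * s) (Ici 0) (ρ x) := by
  rw [EJfun_eq_integral_add hρ₀ μ, EJfun_eq_integral_add hρ μ, add_left_inj] at hE
  have hae := (integral_eq_iff_of_ae_le (integrable_Jfun_sub_mul hρ₀ μ)
    (integrable_Jfun_sub_mul hρ μ)
    (Eventually.of_forall fun x => isMinOn_iff.1 (hmin x) _ (hρ.2.1 x))).1 hE.symm
  filter_upwards [hae] with x hx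
  exact isMinOn_iff.2 fun s hs => hx ▸ isMinOn_iff.1 (hmin x) s hs

end Energy

theorem relaxed_thomasFermi_minimizer_exists_general
    (Iw : ℝ) (hIw : 0 < Iw)
    (V : ℝ → ℝ) (hVmeas : Measurable V) (hV0 : ∀ x, 0 ≤ V x)
    (hVinf : Tendsto V (Filter.cocompact ℝ) atTop) :
    (∃ ρ, TFJadm Iw V ρ ∧ MemLp ρ (ENNReal.ofReal 3) ∧
      EJfun Iw V ρ = ETFJ Iw V) ∧
    (∀ ρ, TFJadm Iw V ρ → EJfun Iw V ρ = ETFJ Iw V →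
      ∃ lam : ℝ,
        (∀ᵐ x : ℝ, ρ x ≠ 0 →
          eAlphaDeriv Iw (ρ x) * (if rhoAlphaC Iw ≤ ρ x then 1 else 0)
            + V x - alphaC Iw = lam) ∧
        (∀ᵐ x : ℝ, ρ x = 0 → lam ≤ V x - alphaC Iw)) := by
  obtain ⟨μ, ρ₀, hρ₀, hLp, hmin⟩ := exists_tfjAdm_isMinOn hIw hVmeas hV0 hVinf
  have hleast : IsLeast {e | ∃ ρ, TFJadm Iw V ρ ∧ e = EJfun Iw V ρ} (EJfun Iw V ρ₀) := by
    refine ⟨⟨ρ₀, hρ₀, rfl⟩, ?_⟩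
    rintro _ ⟨ρ, hρ, rfl⟩
    exact EJfun_le_of_isMinOn hρ₀ hmin hρ
  have hE₀ : EJfun Iw V ρ₀ = ETFJ Iw V := hleast.csInf_eq.symm
  refine ⟨⟨ρ₀, hρ₀, hLp, hE₀⟩, fun ρ hρ hE => ⟨μ - alphaC Iw, ?_, ?_⟩⟩ <;>
    filter_upwards [ae_isMinOn_of_EJfun_eq hρ₀ hmin hρ (hE.trans hE₀.symm)] with x hx <;>
    have hEL := (isMinOn_Jfun_sub_mul_iff hIw (hρ.2.1 x)).1 hx
  · intro hne
    have := hEL.1 hne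
    rw [JfunDeriv] at this
    linarith
  · intro h0
    linarith [hEL.2 h0]

/-- **Proposition (Minimization problem for the relaxed energy).** The relaxed
problem admits a minimizer `ρ ∈ L³`, and every minimizer satisfies the
Euler–Lagrange conditions:
`e_α′(ρ)·1_{ρ ≥ ρ_α} + V − α = λ` a.e. on `supp ρ` and `V − α ≥ λ` a.e. outside. -/
theorem relaxed_thomasFermi_minimizer_exists
    (Iw : ℝ) (hIw : 0 < Iw)
    (V : ℝ → ℝ) (hVmeas : Measurable V) (hV0 : ∀ x, 0 ≤ V x)
    (hVloc : ∀ R : ℝ, ∃ M, ∀ x : ℝ, |x| ≤ R → V x ≤ M)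
    (hVinf : Tendsto V (Filter.cocompact ℝ) atTop) :
    (∃ ρ, TFJadm Iw V ρ ∧ MemLp ρ (ENNReal.ofReal 3) ∧
      EJfun Iw V ρ = ETFJ Iw V) ∧
    (∀ ρ, TFJadm Iw V ρ → EJfun Iw V ρ = ETFJ Iw V →
      ∃ lam : ℝ,
        (∀ᵐ x : ℝ, ρ x ≠ 0 →
          eAlphaDeriv Iw (ρ x) * (if rhoAlphaC Iw ≤ ρ x then 1 else 0)
            + V x - alphaC Iw = lam) ∧
        (∀ᵐ x : ℝ, ρ x = 0 → lam ≤ V x - alphaC Iw)) :=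
  relaxed_thomasFermi_minimizer_exists_general Iw hIw V hVmeas hV0 hVinf

end
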